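/- arXiv:1111.5898 — 4 statements merged into one kernel-verified Lean document; each statement's English description precedes it below -/
import Mathlib

section
/- In the KLR algebra R(n), the intertwiner φ_a (defined as φ_a e(ν) = ((x_a − x_{a+1})τ_a + 1)e(ν) if ν_a = ν_{a+1} and φ_a e(ν) = τ_a e(ν) otherwise) satisfies φ_a² = Q_{a,a+1} + e_{a,a+1}, where Q_{a,a+1} = Σ_ν Q_{ν_a,ν_{a+1}}(x_a, x_{a+1}) e(ν). -/
open scoped BigOperators

/-- Generators of the Khovanov–Lauda–Rouquier algebra `R(n)`:
idempotents `e(ν)` for `ν ∈ Iⁿ`, polynomial generators `x_a` (`1 ≤ a ≤ n`) and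
intertwining generators `τ_l` (`1 ≤ l ≤ n−1`). -/
inductive KLRGen (I : Type) (n : ℕ) : Type where
  | e : (Fin n → I) → KLRGen I n
  | x : Fin n → KLRGen I n
  | t : Fin (n - 1) → KLRGen I n

/-- The free algebra on the KLR generators. -/
abbrev KLRFree (k I : Type) [CommRing k] (n : ℕ) := FreeAlgebra k (KLRGen I n)

/-- The generator `e(ν)` in the free algebra. -/
def KE (k : Type) [CommRing k] {I : Type} {n : ℕ} (ν : Fin n → I) : KLRFree k I n :=
  FreeAlgebra.ι k (KLRGen.e ν)

/-- The generator `x_a` in the free algebra. -/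
def KX (k : Type) [CommRing k] {I : Type} {n : ℕ} (a : Fin n) : KLRFree k I n :=
  FreeAlgebra.ι k (KLRGen.x a)

/-- The generator `τ_l` in the free algebra. -/
def KT (k : Type) [CommRing k] {I : Type} {n : ℕ} (l : Fin (n - 1)) : KLRFree k I n :=
  FreeAlgebra.ι k (KLRGen.t l)

/-- The position `l` regarded in `Fin n`. -/
def posL {n : ℕ} (l : Fin (n - 1)) : Fin n := ⟨l.val, by have := l.isLt; omega⟩

/-- The position `l + 1` regarded in `Fin n`. -/
def posR {n : ℕ} (l : Fin (n - 1)) : Fin n := ⟨l.val + 1, by have := l.isLt; omega⟩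

/-- Evaluation of a two-variable polynomial `q ∈ k[u][v]` (outer variable `u`,
inner variable `v`) at a pair of elements of a `k`-algebra `A`:
`evalQ q a b = q(a, b)`. -/
noncomputable def evalQ {k A : Type} [CommRing k] [Ring A] [Algebra k A]
    (q : Polynomial (Polynomial k)) (u v : A) : A :=
  Polynomial.eval u (q.map (Polynomial.aeval v).toRingHom)

/-- The two-variable "divided difference" `(q(u,v) − q(w,v))/(u − w)` of a polynomial
`q ∈ k[u][v]`, evaluated at elements `u, w, v` of a `k`-algebra `A`. -/
noncomputable def QbarE {k A : Type} [CommRing k] [Ring A] [Algebra k A]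
    (q : Polynomial (Polynomial k)) (u w v : A) : A :=
  ∑ p ∈ q.support, (∑ i ∈ Finset.range p, u ^ i * w ^ (p - 1 - i)) *
    Polynomial.aeval v (q.coeff p)

/-- The defining relations of the Khovanov–Lauda–Rouquier algebra `R(n)` associated with
the family of polynomials `Q = (Q_{ij}(u,v))_{i,j ∈ I}` (Khovanov–Lauda, Rouquier). -/
inductive KLRRel (k I : Type) [CommRing k] [Fintype I] [DecidableEq I] (n : ℕ)
    (Q : I → I → Polynomial (Polynomial k)) :
    KLRFree k I n → KLRFree k I n → Prop where
  | ee (ν ν' : Fin n → I) :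
      KLRRel k I n Q (KE k ν * KE k ν') (if ν = ν' then KE k ν else 0)
  | esum :
      KLRRel k I n Q (∑ ν : Fin n → I, KE k ν) 1
  | xx (a b : Fin n) :
      KLRRel k I n Q (KX k a * KX k b) (KX k b * KX k a)
  | xe (a : Fin n) (ν : Fin n → I) :
      KLRRel k I n Q (KX k a * KE k ν) (KE k ν * KX k a)
  | te (l : Fin (n - 1)) (ν : Fin n → I) :
      KLRRel k I n Q (KT k l * KE k ν)
        (KE k (ν ∘ Equiv.swap (posL l) (posR l)) * KT k l)
  | tt (l m : Fin (n - 1)) (h : l.val + 1 < m.val ∨ m.val + 1 < l.val) :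
      KLRRel k I n Q (KT k l * KT k m) (KT k m * KT k l)
  | tsq (l : Fin (n - 1)) (ν : Fin n → I) :
      KLRRel k I n Q (KT k l * KT k l * KE k ν)
        (evalQ (Q (ν (posL l)) (ν (posR l))) (KX k (posL l)) (KX k (posR l)) * KE k ν)
  | txe (l : Fin (n - 1)) (b : Fin n) (ν : Fin n → I) :
      KLRRel k I n Q
        (KT k l * KX k b * KE k ν - KX k (Equiv.swap (posL l) (posR l) b) * KT k l * KE k ν)
        (if ν (posL l) = ν (posR l) then
          (if b = posL l then -(KE k ν) else if b = posR l then KE k ν else 0)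
        else 0)
  | braid (l m : Fin (n - 1)) (hm : m.val = l.val + 1) (ν : Fin n → I) :
      KLRRel k I n Q
        (KT k m * KT k l * KT k m * KE k ν - KT k l * KT k m * KT k l * KE k ν)
        (if ν (posL l) = ν (posR m) then
          QbarE (Q (ν (posL l)) (ν (posR l))) (KX k (posL l)) (KX k (posR m)) (KX k (posR l))
            * KE k ν
        else 0)

/-- The Khovanov–Lauda–Rouquier algebra `R(n)` over `k` associated with the Cartan datum
indexed by `I` and the polynomials `Q_{ij}`. -/
abbrev KLR (k I : Type) [CommRing k] [Fintype I] [DecidableEq I] (n : ℕ)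
    (Q : I → I → Polynomial (Polynomial k)) := RingQuot (KLRRel k I n Q)

/-- The idempotent `e(ν)` in `R(n)`. -/
noncomputable def KLR.E (k I : Type) [CommRing k] [Fintype I] [DecidableEq I] (n : ℕ)
    (Q : I → I → Polynomial (Polynomial k)) (ν : Fin n → I) : KLR k I n Q :=
  RingQuot.mkAlgHom k (KLRRel k I n Q) (KE k ν)

/-- The element `x_a` in `R(n)`. -/
noncomputable def KLR.X (k I : Type) [CommRing k] [Fintype I] [DecidableEq I] (n : ℕ)
    (Q : I → I → Polynomial (Polynomial k)) (a : Fin n) : KLR k I n Q :=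
  RingQuot.mkAlgHom k (KLRRel k I n Q) (KX k a)

/-- The element `τ_l` in `R(n)`. -/
noncomputable def KLR.T (k I : Type) [CommRing k] [Fintype I] [DecidableEq I] (n : ℕ)
    (Q : I → I → Polynomial (Polynomial k)) (l : Fin (n - 1)) : KLR k I n Q :=
  RingQuot.mkAlgHom k (KLRRel k I n Q) (KT k l)

/-- The intertwiner `φ_a` of the KLR algebra, defined by
`φ_a e(ν) = ((x_a − x_{a+1})τ_a + 1) e(ν)` if `ν_a = ν_{a+1}` and
`φ_a e(ν) = τ_a e(ν)` otherwise. -/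
noncomputable def KLR.phi (k I : Type) [CommRing k] [Fintype I] [DecidableEq I] (n : ℕ)
    (Q : I → I → Polynomial (Polynomial k)) (l : Fin (n - 1)) : KLR k I n Q :=
  ∑ ν : Fin n → I,
    (if ν (posL l) = ν (posR l) then
        (KLR.X k I n Q (posL l) - KLR.X k I n Q (posR l)) * KLR.T k I n Q l + 1
      else KLR.T k I n Q l) * KLR.E k I n Q ν

/-!
Write `φ_a = Σ_μ c_μ e(μ)`. Since `τ_a e(μ) = e(μ s_a) τ_a`, each summand satisfies
`c_μ e(μ) = e(μ s_a) c_μ e(μ)`, hence `φ_a c_μ e(μ) = c_{μ s_a} c_μ e(μ)`. If `μ_a ≠ μ_{a+1}`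
this is `τ_a² e(μ) = Q_{μ_a,μ_{a+1}}(x_a, x_{a+1}) e(μ)`. If `μ_a = μ_{a+1}`, then
`τ_a² e(μ) = 0` because `Q_{ii} = 0`, and the nil-Hecke relations between `τ_a` and
`x_a, x_{a+1}` give `((x_a - x_{a+1}) τ_a + 1)² e(μ) = e(μ)`.
-/

theorem evalQ_zero {k A : Type} [CommRing k] [Ring A] [Algebra k A] (u v : A) :
    evalQ (0 : Polynomial (Polynomial k)) u v = 0 := by
  simp [evalQ]

theorem AlgHom.map_evalQ {k A B : Type} [CommRing k] [Ring A] [Ring B] [Algebra k A]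
    [Algebra k B] (f : A →ₐ[k] B) (q : Polynomial (Polynomial k)) (u v : A) :
    f (evalQ q u v) = evalQ q (f u) (f v) := by
  have hcomp : f.toRingHom.comp (Polynomial.aeval v).toRingHom
      = (Polynomial.aeval (f v)).toRingHom :=
    RingHom.ext fun p => (Polynomial.aeval_algHom_apply f v p).symm
  simp only [evalQ, Polynomial.eval_map]
  rw [← hcomp]
  exact Polynomial.hom_eval₂ q _ f.toRingHom u

theorem intertwiner_mul_self_mul {A : Type*} [Ring A] {e t x y : A}
    (het : e * t = t * e) (htt : t * t * e = 0)
    (htx : t * x * e = y * t * e - e) (hty : t * y * e = x * t * e + e) :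
    ((x - y) * t + 1) * ((x - y) * t + 1) * e = e := by
  have htxt : t * x * t * e = -(t * e) := by
    calc t * x * t * e = t * x * e * t := by rw [mul_assoc _ t e, ← het, ← mul_assoc]
      _ = y * t * (e * t) - e * t := by rw [htx]; noncomm_ring
      _ = y * (t * t * e) - t * e := by rw [het]; noncomm_ring
      _ = -(t * e) := by rw [htt]; noncomm_ring
  have htyt : t * y * t * e = t * e := by
    calc t * y * t * e = t * y * e * t := by rw [mul_assoc _ t e, ← het, ← mul_assoc]
      _ = x * t * (e * t) + e * t := by rw [hty]; noncomm_ring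
      _ = x * (t * t * e) + t * e := by rw [het]; noncomm_ring
      _ = t * e := by rw [htt]; noncomm_ring
  calc ((x - y) * t + 1) * ((x - y) * t + 1) * e
      = (x - y) * (t * x * t * e - t * y * t * e) + 2 * ((x - y) * (t * e)) + e := by
        noncomm_ring
    _ = e := by rw [htxt, htyt]; noncomm_ring

theorem Function.comp_swap_eq_self {α β : Type*} [DecidableEq α] {f : α → β} {a b : α}
    (h : f a = f b) : f ∘ Equiv.swap a b = f := by
  ext x
  simp only [Function.comp_apply, Equiv.swap_apply_def]
  split_ifs <;> simp_all

theorem posL_ne_posR {n : ℕ} (l : Fin (n - 1)) : posL l ≠ posR l := by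
  simp [posL, posR, Fin.ext_iff]

namespace KLR

variable {k I : Type} [CommRing k] [Fintype I] [DecidableEq I] {n : ℕ}
  (Q : I → I → Polynomial (Polynomial k))

local notation "𝐞" => KLR.E k I n Q
local notation "𝐱" => KLR.X k I n Q
local notation "𝛕" => KLR.T k I n Q
local notation "𝐬" l => Equiv.swap (posL l) (posR l)

theorem E_mul_E (ν ν' : Fin n → I) : 𝐞 ν * 𝐞 ν' = if ν = ν' then 𝐞 ν else 0 := by
  have h := RingQuot.mkAlgHom_rel k (KLRRel.ee (k := k) (I := I) (n := n) (Q := Q) ν ν')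
  rwa [map_mul, apply_ite (RingQuot.mkAlgHom k (KLRRel k I n Q)), map_zero] at h

theorem E_mul_self (ν : Fin n → I) : 𝐞 ν * 𝐞 ν = 𝐞 ν := by
  rw [E_mul_E, if_pos rfl]

theorem commute_X_E (a : Fin n) (ν : Fin n → I) : Commute (𝐱 a) (𝐞 ν) := by
  have h := RingQuot.mkAlgHom_rel k (KLRRel.xe (k := k) (I := I) (n := n) (Q := Q) a ν)
  rwa [map_mul, map_mul] at h

theorem T_mul_E (l : Fin (n - 1)) (ν : Fin n → I) : 𝛕 l * 𝐞 ν = 𝐞 (ν ∘ 𝐬 l) * 𝛕 l := by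
  have h := RingQuot.mkAlgHom_rel k (KLRRel.te (k := k) (I := I) (n := n) (Q := Q) l ν)
  rwa [map_mul, map_mul] at h

theorem commute_T_E {l : Fin (n - 1)} {ν : Fin n → I} (h : ν (posL l) = ν (posR l)) :
    Commute (𝛕 l) (𝐞 ν) := by
  simpa only [Commute, SemiconjBy, Function.comp_swap_eq_self h] using T_mul_E Q l ν

theorem T_mul_T_mul_E (l : Fin (n - 1)) (ν : Fin n → I) :
    𝛕 l * 𝛕 l * 𝐞 ν = evalQ (Q (ν (posL l)) (ν (posR l))) (𝐱 (posL l)) (𝐱 (posR l)) * 𝐞 ν := by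
  have h := RingQuot.mkAlgHom_rel k (KLRRel.tsq (k := k) (I := I) (n := n) (Q := Q) l ν)
  rwa [map_mul, map_mul, map_mul, AlgHom.map_evalQ] at h

theorem T_mul_X_mul_E (l : Fin (n - 1)) (b : Fin n) (ν : Fin n → I) :
    𝛕 l * 𝐱 b * 𝐞 ν = 𝐱 ((𝐬 l) b) * 𝛕 l * 𝐞 ν
      + if ν (posL l) = ν (posR l) then
          (if b = posL l then -𝐞 ν else if b = posR l then 𝐞 ν else 0)
        else 0 := by
  have h := RingQuot.mkAlgHom_rel k (KLRRel.txe (k := k) (I := I) (n := n) (Q := Q) l b ν)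
  simp only [map_sub, map_mul, apply_ite (RingQuot.mkAlgHom k (KLRRel k I n Q)), map_neg,
    map_zero] at h
  exact sub_eq_iff_eq_add'.mp h

noncomputable def phiCoeff (l : Fin (n - 1)) (ν : Fin n → I) : KLR k I n Q :=
  if ν (posL l) = ν (posR l) then (𝐱 (posL l) - 𝐱 (posR l)) * 𝛕 l + 1 else 𝛕 l

theorem phi_eq_sum (l : Fin (n - 1)) : KLR.phi k I n Q l = ∑ ν, phiCoeff Q l ν * 𝐞 ν := rfl

theorem phi_mul_E (l : Fin (n - 1)) (μ : Fin n → I) :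
    KLR.phi k I n Q l * 𝐞 μ = phiCoeff Q l μ * 𝐞 μ := by
  simp only [phi_eq_sum, Finset.sum_mul, mul_assoc, E_mul_E, mul_ite, mul_zero,
    Finset.sum_ite_eq', Finset.mem_univ, if_true]

theorem phiCoeff_mul_E (l : Fin (n - 1)) (μ : Fin n → I) :
    phiCoeff Q l μ * 𝐞 μ = 𝐞 (μ ∘ 𝐬 l) * phiCoeff Q l μ := by
  unfold phiCoeff
  split_ifs with hμ
  · rw [Function.comp_swap_eq_self hμ]
    exact ((((commute_X_E Q _ μ).sub_left (commute_X_E Q _ μ)).mul_left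
      (commute_T_E Q hμ)).add_left (Commute.one_left _)).eq
  · exact T_mul_E Q l μ

theorem E_swap_mul_phiCoeff_mul_E (l : Fin (n - 1)) (μ : Fin n → I) :
    𝐞 (μ ∘ 𝐬 l) * (phiCoeff Q l μ * 𝐞 μ) = phiCoeff Q l μ * 𝐞 μ := by
  rw [← mul_assoc, ← phiCoeff_mul_E, mul_assoc, E_mul_self]

theorem phi_mul_phiCoeff_mul_E (l : Fin (n - 1)) (μ : Fin n → I) :
    KLR.phi k I n Q l * (phiCoeff Q l μ * 𝐞 μ)
      = phiCoeff Q l (μ ∘ 𝐬 l) * (phiCoeff Q l μ * 𝐞 μ) := by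
  rw [← E_swap_mul_phiCoeff_mul_E, ← mul_assoc, phi_mul_E, mul_assoc,
    E_swap_mul_phiCoeff_mul_E]

theorem phiCoeff_swap_mul_phiCoeff_mul_E (hQdiag : ∀ i : I, Q i i = 0) (l : Fin (n - 1))
    (μ : Fin n → I) :
    phiCoeff Q l (μ ∘ 𝐬 l) * (phiCoeff Q l μ * 𝐞 μ)
      = evalQ (Q (μ (posL l)) (μ (posR l))) (𝐱 (posL l)) (𝐱 (posR l)) * 𝐞 μ
        + if μ (posL l) = μ (posR l) then 𝐞 μ else 0 := by
  by_cases hμ : μ (posL l) = μ (posR l)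
  · have htx := T_mul_X_mul_E Q l (posL l) μ
    have hty := T_mul_X_mul_E Q l (posR l) μ
    have htt := T_mul_T_mul_E Q l μ
    rw [if_pos hμ, if_pos rfl, Equiv.swap_apply_left, ← sub_eq_add_neg] at htx
    rw [if_pos hμ, if_neg (posL_ne_posR l).symm, if_pos rfl, Equiv.swap_apply_right] at hty
    rw [hμ, hQdiag, evalQ_zero, zero_mul] at htt
    rw [Function.comp_swap_eq_self hμ, phiCoeff, if_pos hμ, hμ, hQdiag, evalQ_zero, zero_mul, zero_add, if_pos rfl,
      ← mul_assoc]
    exact intertwiner_mul_self_mul (commute_T_E Q hμ).eq.symm htt htx hty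
  · have hμ' : ¬(μ ∘ 𝐬 l) (posL l) = (μ ∘ 𝐬 l) (posR l) := by
      simpa [Equiv.swap_apply_left, Equiv.swap_apply_right, eq_comm] using hμ
    rw [phiCoeff, phiCoeff, if_neg hμ, if_neg hμ', if_neg hμ, add_zero, ← mul_assoc,
      T_mul_T_mul_E]

end KLR

theorem KLR.phi_sq_general
    (k I : Type) [CommRing k] [Fintype I] [DecidableEq I] (n : ℕ)
    (Q : I → I → Polynomial (Polynomial k))
    (hQdiag : ∀ i : I, Q i i = 0)
    (l : Fin (n - 1)) :
    KLR.phi k I n Q l * KLR.phi k I n Q l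
      = (∑ ν : Fin n → I,
          evalQ (Q (ν (posL l)) (ν (posR l))) (KLR.X k I n Q (posL l))
            (KLR.X k I n Q (posR l)) * KLR.E k I n Q ν)
        + (∑ ν : Fin n → I,
            if ν (posL l) = ν (posR l) then KLR.E k I n Q ν else 0) := by
  calc KLR.phi k I n Q l * KLR.phi k I n Q l
      = ∑ μ, KLR.phi k I n Q l * (KLR.phiCoeff Q l μ * KLR.E k I n Q μ) := Finset.mul_sum _ _ _
    _ = _ := by
      simp only [KLR.phi_mul_phiCoeff_mul_E, KLR.phiCoeff_swap_mul_phiCoeff_mul_E Q hQdiag,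
        Finset.sum_add_distrib]

/-- **Square of the intertwiner.**  In the KLR algebra `R(n)`, the intertwiner `φ_a`
satisfies `φ_a² = Q_{a,a+1} + e_{a,a+1}`, where
`Q_{a,a+1} = Σ_ν Q_{ν_a,ν_{a+1}}(x_a, x_{a+1}) e(ν)` and
`e_{a,a+1} = Σ_{ν : ν_a = ν_{a+1}} e(ν)`.  Here `Q_{ii} = 0` and
`Q_{ij}(u,v) = Q_{ji}(v,u)`. -/
theorem KLR.phi_sq
    (k I : Type) [CommRing k] [Fintype I] [DecidableEq I] (n : ℕ)
    (Q : I → I → Polynomial (Polynomial k))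
    (hQdiag : ∀ i : I, Q i i = 0)
    (hQsymm : ∀ i j : I, Q i j
      = evalQ (A := Polynomial (Polynomial k)) (Q j i) (Polynomial.C Polynomial.X)
          Polynomial.X)
    (l : Fin (n - 1)) :
    KLR.phi k I n Q l * KLR.phi k I n Q l
      = (∑ ν : Fin n → I,
          evalQ (Q (ν (posL l)) (ν (posR l))) (KLR.X k I n Q (posL l))
            (KLR.X k I n Q (posR l)) * KLR.E k I n Q ν)
        + (∑ ν : Fin n → I,
            if ν (posL l) = ν (posR l) then KLR.E k I n Q ν else 0) :=
  KLR.phi_sq_general k I n Q hQdiag l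
end

section
/- Let F: Mod(R) → Mod(R′) be a k-linear functor between module categories over k-algebras R, R′ with anti-involutions, and suppose F admits a Ψ-adjoint F^∨. Then F is isomorphic to the functor K ⊗_R (−) where K = F(R) is the natural (R′, R)-bimodule, and F^∨(R′) ≅ F(R)^ψ as (R, R′)-bimodules. -/
open CategoryTheory TensorProduct

variable (R : Type) [Ring R] (ψ : R →+* Rᵐᵒᵖ)

def psiRelSet (M N : Type) [AddCommGroup M] [AddCommGroup N] [Module R M] [Module R N] :
    Set (M ⊗[ℤ] N) :=
  {z | ∃ (r : R) (m : M) (n : N), z = ((ψ r).unop • m) ⊗ₜ[ℤ] n - m ⊗ₜ[ℤ] (r • n)}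

def PsiCar (M N : Type) [AddCommGroup M] [AddCommGroup N] [Module R M] [Module R N] : Type :=
  (M ⊗[ℤ] N) ⧸ Submodule.span ℤ (psiRelSet R ψ M N)

noncomputable instance (M N : Type) [AddCommGroup M] [AddCommGroup N] [Module R M]
    [Module R N] : AddCommGroup (PsiCar R ψ M N) := by
  unfold PsiCar; infer_instance

noncomputable def psiMap {M M' N N' : ModuleCat R} (f : M ⟶ M') (g : N ⟶ N') :
    PsiCar R ψ M N →ₗ[ℤ] PsiCar R ψ M' N' :=
  Submodule.mapQ _ _
    (TensorProduct.map f.hom.toAddMonoidHom.toIntLinearMap g.hom.toAddMonoidHom.toIntLinearMap)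
    (by
      rw [Submodule.span_le]
      rintro z ⟨r, m, n, rfl⟩
      simp only [SetLike.mem_coe, Submodule.mem_comap, map_sub, TensorProduct.map_tmul]
      refine Submodule.subset_span ⟨r, f m, g n, ?_⟩
      simp [map_smul]
      erw [map_sub, TensorProduct.map_tmul, TensorProduct.map_tmul]
      simp)

lemma psiMap_id (M N : ModuleCat R) :
    psiMap R ψ (𝟙 M) (𝟙 N) = LinearMap.id := by
  apply Submodule.linearMap_qext
  apply TensorProduct.ext'
  intro m n
  simp [psiMap, Submodule.mapQ_apply]
  rfl

lemma psiMap_comp {M M' M'' N N' N'' : ModuleCat R}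
    (f : M ⟶ M') (f' : M' ⟶ M'') (g : N ⟶ N') (g' : N' ⟶ N'') :
    (psiMap R ψ f' g').comp (psiMap R ψ f g) = psiMap R ψ (f ≫ f') (g ≫ g') := by
  apply Submodule.linearMap_qext
  apply TensorProduct.ext'
  intro m n
  simp [psiMap, Submodule.mapQ_apply]
  rfl

noncomputable def PsiFunctor : ModuleCat R ⥤ ModuleCat R ⥤ AddCommGrpCat where
  obj M :=
    { obj := fun N => AddCommGrpCat.of (PsiCar R ψ M N)
      map := fun g => AddCommGrpCat.ofHom (psiMap R ψ (𝟙 M) g).toAddMonoidHom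
      map_id := by
        intro N
        ext z
        exact congrArg (fun h => h z) (congrArg LinearMap.toAddMonoidHom (psiMap_id R ψ M N))
      map_comp := by
        intro N N' N'' g g'
        ext z
        have := psiMap_comp R ψ (𝟙 M) (𝟙 M) g g'
        simp only [Category.comp_id] at this
        exact (congrArg (fun h => h z) (congrArg LinearMap.toAddMonoidHom this)).symm }
  map f :=
    { app := fun N => AddCommGrpCat.ofHom (psiMap R ψ f (𝟙 N)).toAddMonoidHom
      naturality := by
        intro N N' g
        ext z
        have h1 := psiMap_comp R ψ (𝟙 _) f g (𝟙 _)
        have h2 := psiMap_comp R ψ f (𝟙 _) (𝟙 _) g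
        simp only [Category.comp_id, Category.id_comp] at h1 h2
        rw [← h2] at h1
        exact congrArg (fun h => h z) (congrArg LinearMap.toAddMonoidHom h1) }
  map_id := by
    intro M
    apply NatTrans.ext
    funext N
    ext z
    exact congrArg (fun h => h z) (congrArg LinearMap.toAddMonoidHom (psiMap_id R ψ M N))
  map_comp := by
    intro M M' M'' f f'
    apply NatTrans.ext
    funext N
    ext z
    have := psiMap_comp R ψ f f' (𝟙 N) (𝟙 N)
    simp only [Category.comp_id] at this
    exact (congrArg (fun h => h z) (congrArg LinearMap.toAddMonoidHom this)).symm

section TensorFunctor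

variable (S S' : Type) [Ring S] [Ring S'] (F : ModuleCat S ⥤ ModuleCat S')

/-- Right multiplication by `r` as an endomorphism of `S` as a left `S`-module. -/
def rmulLin (r : S) : S →ₗ[S] S where
  toFun x := x * r
  map_add' a b := add_mul a b r
  map_smul' s a := by simp [mul_assoc, smul_eq_mul]

/-- Right multiplication by `r`, as a morphism in `Mod(S)`. -/
def rmul (r : S) : ModuleCat.of S S ⟶ ModuleCat.of S S := ModuleCat.ofHom (rmulLin S r)

/-- The relations defining `F(S) ⊗_S M` inside `F(S) ⊗_ℤ M`, where the right `S`-module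
structure on the `(S', S)`-bimodule `K = F(S)` comes from functoriality of `F` applied to
right multiplications. -/
def tensRelSet (M : ModuleCat S) : Set ((F.obj (ModuleCat.of S S)) ⊗[ℤ] M) :=
  {z | ∃ (r : S) (kk : F.obj (ModuleCat.of S S)) (m : M),
    z = (F.map (rmul S r) kk) ⊗ₜ[ℤ] m - kk ⊗ₜ[ℤ] (r • m)}

/-- The `S'`-module `K ⊗_S M`, where `K = F(S)`. -/
def TensCar (M : ModuleCat S) : Type :=
  ((F.obj (ModuleCat.of S S)) ⊗[ℤ] M) ⧸ Submodule.span S' (tensRelSet S S' F M)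

noncomputable instance (M : ModuleCat S) : AddCommGroup (TensCar S S' F M) := by
  unfold TensCar; infer_instance

noncomputable instance (M : ModuleCat S) : Module S' (TensCar S S' F M) := by
  unfold TensCar; infer_instance

/-- The underlying `S'`-linear map `K ⊗_ℤ M → K ⊗_ℤ M'` induced by `f : M → M'`. -/
noncomputable def tensMapAux {M M' : ModuleCat S} (f : M ⟶ M') :
    ((F.obj (ModuleCat.of S S)) ⊗[ℤ] M) →ₗ[S'] ((F.obj (ModuleCat.of S S)) ⊗[ℤ] M') where
  toFun := TensorProduct.map LinearMap.id f.hom.toAddMonoidHom.toIntLinearMap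
  map_add' := map_add _
  map_smul' r' z := by
    induction z using TensorProduct.induction_on with
    | zero => simp
    | tmul kk m => simp [TensorProduct.smul_tmul', TensorProduct.map_tmul]
    | add a b ha hb => simp only [smul_add, map_add, RingHom.id_apply] at *; rw [ha, hb]

/-- Functoriality of `K ⊗_S (−)`, `K = F(S)`. -/
noncomputable def tensMap {M M' : ModuleCat S} (f : M ⟶ M') :
    TensCar S S' F M →ₗ[S'] TensCar S S' F M' :=
  Submodule.mapQ _ _ (tensMapAux S S' F f)
    (by
      rw [Submodule.span_le]
      rintro z ⟨r, kk, m, rfl⟩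
      simp only [SetLike.mem_coe, Submodule.mem_comap, map_sub]
      have : tensMapAux S S' F f ((F.map (rmul S r) kk) ⊗ₜ[ℤ] m)
          - tensMapAux S S' F f (kk ⊗ₜ[ℤ] (r • m))
          = (F.map (rmul S r) kk) ⊗ₜ[ℤ] (f m) - kk ⊗ₜ[ℤ] (r • f m) := by
        simp [tensMapAux, TensorProduct.map_tmul, map_smul]
      rw [this]
      exact Submodule.subset_span ⟨r, kk, f m, rfl⟩)

lemma tensMap_id (M : ModuleCat S) : tensMap S S' F (𝟙 M) = LinearMap.id := by
  apply Submodule.linearMap_qext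
  apply LinearMap.ext
  intro z
  induction z using TensorProduct.induction_on with
  | zero => simp
  | tmul kk m => simp [tensMap, Submodule.mapQ_apply, tensMapAux]; rfl
  | add a b ha hb => simp only [map_add] at *; rw [ha, hb]

lemma tensMap_comp {M M' M'' : ModuleCat S} (f : M ⟶ M') (g : M' ⟶ M'') :
    (tensMap S S' F g).comp (tensMap S S' F f) = tensMap S S' F (f ≫ g) := by
  apply Submodule.linearMap_qext
  apply LinearMap.ext
  intro z
  induction z using TensorProduct.induction_on with
  | zero => simp
  | tmul kk m => simp [tensMap, Submodule.mapQ_apply, tensMapAux]; rfl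
  | add a b ha hb => simp only [map_add] at *; rw [ha, hb]

/-- The functor `K ⊗_S (−) : Mod(S) → Mod(S')`, where `K = F(S)` is the natural
`(S', S)`-bimodule. -/
noncomputable def TensFunctor : ModuleCat S ⥤ ModuleCat S' where
  obj M := ModuleCat.of S' (TensCar S S' F M)
  map f := ModuleCat.ofHom (tensMap S S' F f)
  map_id := by
    intro M
    exact congrArg ModuleCat.ofHom (tensMap_id S S' F M)
  map_comp := by
    intro M M' M'' f g
    exact (congrArg ModuleCat.ofHom (tensMap_comp S S' F f g)).symm

end TensorFunctor

/-!
`Ψ(X, R) ≅ X` for every `X` (via `x ⊗ r ↦ ψ(r) x`), and `Ψ(R, N) ≅ N` (via `r ⊗ n ↦ ψ(r) n`)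
once `ψ` is an involution. Evaluating the adjunction at `(R, R')` therefore gives
`e : F(R) ≅ Ψ'(F(R), R') ≅ Ψ(R, G(R')) ≅ G(R')`, and its naturality in the two variables,
applied to right multiplications, says that `e` exchanges the two bimodule structures.
Evaluating at `(M, R')` gives `F(M) ≅ Ψ'(F(M), R') ≅ Ψ(M, G(R'))`, and along `e` the latter is
`Ψ(M, F(R)^ψ) ≅ F(R) ⊗_R M`, naturally in `M` and `R'`-linearly.
-/

namespace PsiCar

variable {R ψ} {M N P : Type} [AddCommGroup M] [AddCommGroup N] [Module R M] [Module R N]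
  [AddCommGroup P]

noncomputable def mk : M →+ N →+ PsiCar R ψ M N :=
  LinearMap.toAddMonoidHom'.comp
    ((TensorProduct.mk ℤ M N).compr₂ (Submodule.mkQ _)).toAddMonoidHom

theorem mk_psi_smul_left (r : R) (m : M) (n : N) :
    mk (R := R) (ψ := ψ) ((ψ r).unop • m) n = mk m (r • n) :=
  (Submodule.Quotient.eq _).mpr (Submodule.subset_span ⟨r, m, n, rfl⟩)

@[elab_as_elim]
theorem induction_on {p : PsiCar R ψ M N → Prop} (z : PsiCar R ψ M N) (zero : p 0)
    (add : ∀ x y, p x → p y → p (x + y)) (mk : ∀ m n, p (mk m n)) : p z := by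
  obtain ⟨w, rfl⟩ := Submodule.mkQ_surjective _ z
  induction w using TensorProduct.induction_on with
  | zero => exact zero
  | tmul m n => exact mk m n
  | add x y hx hy => rw [map_add]; exact add _ _ hx hy

theorem addHom_ext {f g : PsiCar R ψ M N →+ P} (h : ∀ m n, f (mk m n) = g (mk m n)) : f = g :=
  AddMonoidHom.ext fun z => by
    induction z using induction_on with
    | zero => simp
    | add x y hx hy => simp [hx, hy]
    | mk m n => exact h m n

noncomputable def lift (f : M →+ N →+ P) (hf : ∀ r m n, f ((ψ r).unop • m) n = f m (r • n)) :
    PsiCar R ψ M N →+ P :=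
  (Submodule.liftQ _ (TensorProduct.liftAddHom f fun c m n => by
      rw [map_zsmul, AddMonoidHom.zsmul_apply, map_zsmul]).toIntLinearMap
    (by
      rw [Submodule.span_le]
      rintro _ ⟨r, m, n, rfl⟩
      simp [hf])).toAddMonoidHom

@[simp]
theorem lift_mk (f : M →+ N →+ P) (hf : ∀ r m n, f ((ψ r).unop • m) n = f m (r • n))
    (m : M) (n : N) : lift f hf (mk m n) = f m n :=
  rfl

end PsiCar

theorem psiMap_mk {M M' N N' : ModuleCat R} (f : M ⟶ M') (g : N ⟶ N') (m : M) (n : N) :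
    psiMap R ψ f g (PsiCar.mk m n) = PsiCar.mk (f m) (g n) :=
  rfl

section Unitors

variable {R}

noncomputable def psiSmulAddHom (M : Type) [AddCommGroup M] [Module R M] : R →+ M →+ M :=
  (smulAddHom R M).comp
    ((MulOpposite.opAddEquiv.symm : Rᵐᵒᵖ ≃+ R).toAddMonoidHom.comp ψ.toAddMonoidHom)

@[simp]
theorem psiSmulAddHom_apply (M : Type) [AddCommGroup M] [Module R M] (r : R) (m : M) :
    psiSmulAddHom ψ M r m = (ψ r).unop • m :=
  rfl

variable {ψ}

noncomputable def psiRightUnitor (X : ModuleCat R) : PsiCar R ψ X (ModuleCat.of R R) ≃+ X :=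
  AddMonoidHom.toAddEquiv
    (PsiCar.lift (psiSmulAddHom ψ X).flip fun r x n => by
      simp [smul_eq_mul, mul_smul])
    (PsiCar.mk.flip 1)
    (PsiCar.addHom_ext fun x n => by
      show PsiCar.mk ((ψ n).unop • x) 1 = PsiCar.mk x n
      rw [PsiCar.mk_psi_smul_left, smul_eq_mul, mul_one])
    (by ext x; show (ψ 1).unop • x = x; simp)

theorem psiRightUnitor_symm_naturality {X Y : ModuleCat R} (f : X ⟶ Y) (x : X) :
    (psiRightUnitor (ψ := ψ) Y).symm (f x) =
      psiMap R ψ f (𝟙 _) ((psiRightUnitor X).symm x) :=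
  rfl

theorem psiRightUnitor_symm_smul (X : ModuleCat R) (r : R) (x : X) :
    (psiRightUnitor (ψ := ψ) X).symm ((ψ r).unop • x) =
      psiMap R ψ (𝟙 X) (rmul R r) ((psiRightUnitor X).symm x) := by
  show PsiCar.mk ((ψ r).unop • x) 1 = PsiCar.mk x (1 * r)
  rw [PsiCar.mk_psi_smul_left, one_mul, smul_eq_mul, mul_one]

variable (hψ : ∀ r : R, (ψ ((ψ r).unop)).unop = r)
include hψ

noncomputable def psiLeftUnitor (N : ModuleCat R) : PsiCar R ψ (ModuleCat.of R R) N ≃+ N :=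
  AddMonoidHom.toAddEquiv
    (PsiCar.lift (psiSmulAddHom ψ N) fun r m n => by
      simp [smul_eq_mul, hψ, mul_smul])
    (PsiCar.mk 1)
    (PsiCar.addHom_ext fun m n => by
      show PsiCar.mk 1 ((ψ m).unop • n) = PsiCar.mk m n
      rw [← PsiCar.mk_psi_smul_left, hψ, smul_eq_mul, mul_one])
    (by ext n; show (ψ 1).unop • n = n; simp)

theorem psiLeftUnitor_naturality {N N' : ModuleCat R} (g : N ⟶ N')
    (z : PsiCar R ψ (ModuleCat.of R R) N) :
    psiLeftUnitor hψ N' (psiMap R ψ (𝟙 _) g z) = g (psiLeftUnitor hψ N z) := by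
  induction z using PsiCar.induction_on with
  | zero => simp
  | add x y hx hy => simp only [map_add, hx, hy]
  | mk m n => exact (map_smul g.hom _ n).symm

theorem psiLeftUnitor_rmul (N : ModuleCat R) (r : R) (z : PsiCar R ψ (ModuleCat.of R R) N) :
    psiLeftUnitor hψ N (psiMap R ψ (rmul R r) (𝟙 N) z) = (ψ r).unop • psiLeftUnitor hψ N z := by
  induction z using PsiCar.induction_on with
  | zero => simp
  | add x y hx hy => simp only [map_add, smul_add, hx, hy]
  | mk m n =>
    show (ψ (m * r)).unop • n = (ψ r).unop • (ψ m).unop • n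
    rw [map_mul, MulOpposite.unop_mul, mul_smul]

end Unitors

namespace TensCar

variable {S S' : Type} [Ring S] [Ring S'] {F : ModuleCat S ⥤ ModuleCat S'} {M : ModuleCat S}
  {P : Type} [AddCommGroup P]

noncomputable def mk : F.obj (ModuleCat.of S S) →+ M →+ TensCar S S' F M :=
  (LinearMap.toAddMonoidHom'.comp (TensorProduct.mk ℤ _ M).toAddMonoidHom).compr₂
    (Submodule.mkQ _).toAddMonoidHom

theorem mk_rmul (r : S) (k : F.obj (ModuleCat.of S S)) (m : M) :
    mk (F.map (rmul S r) k) m = mk k (r • m) :=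
  (Submodule.Quotient.eq _).mpr (Submodule.subset_span ⟨r, k, m, rfl⟩)

theorem smul_mk (s' : S') (k : F.obj (ModuleCat.of S S)) (m : M) :
    s' • mk k m = mk (s' • k) m :=
  rfl

@[elab_as_elim]
theorem induction_on {p : TensCar S S' F M → Prop} (z : TensCar S S' F M) (zero : p 0)
    (add : ∀ x y, p x → p y → p (x + y)) (mk : ∀ k m, p (mk k m)) : p z := by
  obtain ⟨w, rfl⟩ := Submodule.mkQ_surjective _ z
  induction w using TensorProduct.induction_on with
  | zero => exact zero
  | tmul k m => exact mk k m
  | add x y hx hy => rw [map_add]; exact add _ _ hx hy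

theorem addHom_ext {f g : TensCar S S' F M →+ P} (h : ∀ k m, f (mk k m) = g (mk k m)) :
    f = g :=
  AddMonoidHom.ext fun z => by
    induction z using induction_on with
    | zero => simp
    | add x y hx hy => simp [hx, hy]
    | mk k m => exact h k m

theorem smul_mem_tensRelSet {z} (hz : z ∈ tensRelSet S S' F M) (s' : S') :
    s' • z ∈ tensRelSet S S' F M := by
  obtain ⟨r, k, m, rfl⟩ := hz
  refine ⟨r, s' • k, m, ?_⟩
  rw [smul_sub, smul_tmul', smul_tmul', map_smul]

noncomputable def lift (f : F.obj (ModuleCat.of S S) →+ M →+ P)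
    (hf : ∀ r k m, f (F.map (rmul S r) k) m = f k (r • m)) : TensCar S S' F M →+ P :=
  QuotientAddGroup.lift (Submodule.span S' (tensRelSet S S' F M)).toAddSubgroup
    (TensorProduct.liftAddHom f fun c k m => by
      rw [map_zsmul, AddMonoidHom.zsmul_apply, map_zsmul])
    -- the relations are stable under `S'`, so their `S'`-span is their additive span
    (fun z hz => by
      induction hz using Submodule.closure_induction with
      | zero => exact zero_mem _
      | add x y _ _ hx hy => exact add_mem hx hy
      | smul_mem s' z hz =>
        obtain ⟨r, k, m, h⟩ := smul_mem_tensRelSet hz s'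
        rw [AddMonoidHom.mem_ker, h]
        simp [hf])

@[simp]
theorem lift_mk (f : F.obj (ModuleCat.of S S) →+ M →+ P)
    (hf : ∀ r k m, f (F.map (rmul S r) k) m = f k (r • m)) (k : F.obj (ModuleCat.of S S))
    (m : M) : lift f hf (mk k m) = f k m :=
  rfl

end TensCar

section PsiTensor

variable {R ψ} {R' : Type} [Ring R'] {F : ModuleCat R ⥤ ModuleCat R'} {N : ModuleCat R}
  (e : F.obj (ModuleCat.of R R) ≃+ N)

theorem symm_smul_eq_map_rmul (he : ∀ r k, e (F.map (rmul R (ψ r).unop) k) = r • e k)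
    (r : R) (n : N) : e.symm (r • n) = F.map (rmul R (ψ r).unop) (e.symm n) :=
  e.symm_apply_eq.mpr (by rw [he, e.apply_symm_apply])

variable (hψ : ∀ r : R, (ψ ((ψ r).unop)).unop = r)
  (he : ∀ r k, e (F.map (rmul R (ψ r).unop) k) = r • e k)

noncomputable def psiEquivTensCar (M : ModuleCat R) : PsiCar R ψ M N ≃+ TensCar R R' F M :=
  AddMonoidHom.toAddEquiv
    (PsiCar.lift (TensCar.mk.comp e.symm.toAddMonoidHom).flip fun r m n => by
      simp [symm_smul_eq_map_rmul e he, TensCar.mk_rmul])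
    (TensCar.lift (PsiCar.mk.flip.comp e.toAddMonoidHom) fun r k m => by
      have he' : e (F.map (rmul R r) k) = (ψ r).unop • e k := by
        simpa only [hψ] using he (ψ r).unop k
      simp [he', ← PsiCar.mk_psi_smul_left, hψ])
    (PsiCar.addHom_ext fun m n => by simp)
    (TensCar.addHom_ext fun k m => by simp)

theorem psiEquivTensCar_mk (M : ModuleCat R) (m : M) (n : N) :
    psiEquivTensCar e hψ he M (PsiCar.mk m n) = TensCar.mk (e.symm n) m :=
  rfl

theorem psiEquivTensCar_naturality {M M' : ModuleCat R} (f : M ⟶ M') (z : PsiCar R ψ M N) :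
    psiEquivTensCar e hψ he M' (psiMap R ψ f (𝟙 N) z) =
      tensMap R R' F f (psiEquivTensCar e hψ he M z) := by
  induction z using PsiCar.induction_on with
  | zero => simp
  | add x y hx hy => simp only [map_add, hx, hy]
  | mk m n => rfl

theorem psiEquivTensCar_psiMap_right (M : ModuleCat R) (g : N ⟶ N) (s' : R')
    (hg : ∀ k, g (e k) = e (s' • k)) (z : PsiCar R ψ M N) :
    psiEquivTensCar e hψ he M (psiMap R ψ (𝟙 M) g z) = s' • psiEquivTensCar e hψ he M z := by
  induction z using PsiCar.induction_on with
  | zero => simp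
  | add x y hx hy => simp only [map_add, smul_add, hx, hy]
  | mk m n =>
    obtain ⟨k, rfl⟩ := e.surjective n
    simp [psiMap_mk, psiEquivTensCar_mk, hg, TensCar.smul_mk]

end PsiTensor

namespace PsiAdjunction

variable {R ψ} {R' : Type} [Ring R'] {ψ' : R' →+* R'ᵐᵒᵖ}
  {F : ModuleCat R ⥤ ModuleCat R'} {G : ModuleCat R' ⥤ ModuleCat R}
  (α : F ⋙ PsiFunctor R' ψ' ≅
    PsiFunctor R ψ ⋙ (Functor.whiskeringLeft (ModuleCat R') (ModuleCat R) AddCommGrpCat).obj G)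

noncomputable def adjEquiv (M : ModuleCat R) (N : ModuleCat R') :
    PsiCar R' ψ' (F.obj M) N ≃+ PsiCar R ψ M (G.obj N) :=
  ((α.app M).app N).addCommGroupIsoToAddEquiv

theorem adjEquiv_naturality_left {M M' : ModuleCat R} (f : M ⟶ M') (N : ModuleCat R')
    (z : PsiCar R' ψ' (F.obj M) N) :
    adjEquiv α M' N (psiMap R' ψ' (F.map f) (𝟙 N) z) =
      psiMap R ψ f (𝟙 (G.obj N)) (adjEquiv α M N z) :=
  ConcreteCategory.congr_hom (NatTrans.congr_app (α.hom.naturality f) N) z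

theorem adjEquiv_naturality_right (M : ModuleCat R) {N N' : ModuleCat R'} (g : N ⟶ N')
    (z : PsiCar R' ψ' (F.obj M) N) :
    adjEquiv α M N' (psiMap R' ψ' (𝟙 (F.obj M)) g z) =
      psiMap R ψ (𝟙 M) (G.map g) (adjEquiv α M N z) :=
  ConcreteCategory.congr_hom ((α.hom.app M).naturality g) z

variable (hψ : ∀ r : R, (ψ ((ψ r).unop)).unop = r)

noncomputable def bimoduleEquiv : F.obj (ModuleCat.of R R) ≃+ G.obj (ModuleCat.of R' R') :=
  (psiRightUnitor _).symm.trans ((adjEquiv α _ _).trans (psiLeftUnitor hψ _))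

theorem bimoduleEquiv_map_rmul (r : R) (k : F.obj (ModuleCat.of R R)) :
    bimoduleEquiv α hψ (F.map (rmul R r) k) = (ψ r).unop • bimoduleEquiv α hψ k := by
  simp only [bimoduleEquiv, AddEquiv.trans_apply]
  rw [psiRightUnitor_symm_naturality, adjEquiv_naturality_left, psiLeftUnitor_rmul]

theorem bimoduleEquiv_smul (r' : R') (k : F.obj (ModuleCat.of R R)) :
    bimoduleEquiv α hψ ((ψ' r').unop • k) = G.map (rmul R' r') (bimoduleEquiv α hψ k) := by
  simp only [bimoduleEquiv, AddEquiv.trans_apply]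
  rw [psiRightUnitor_symm_smul, adjEquiv_naturality_right, psiLeftUnitor_naturality]

theorem bimoduleEquiv_map_rmul_psi (r : R) (k : F.obj (ModuleCat.of R R)) :
    bimoduleEquiv α hψ (F.map (rmul R (ψ r).unop) k) = r • bimoduleEquiv α hψ k := by
  rw [bimoduleEquiv_map_rmul, hψ]

noncomputable def tensorEquiv (M : ModuleCat R) : F.obj M ≃+ TensCar R R' F M :=
  (psiRightUnitor _).symm.trans ((adjEquiv α M _).trans
    (psiEquivTensCar (bimoduleEquiv α hψ) hψ (bimoduleEquiv_map_rmul_psi α hψ) M))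

theorem tensorEquiv_naturality {M M' : ModuleCat R} (f : M ⟶ M') (x : F.obj M) :
    tensorEquiv α hψ M' (F.map f x) = tensMap R R' F f (tensorEquiv α hψ M x) := by
  simp only [tensorEquiv, AddEquiv.trans_apply]
  rw [psiRightUnitor_symm_naturality, adjEquiv_naturality_left, psiEquivTensCar_naturality]

theorem tensorEquiv_smul (hψ' : ∀ r : R', (ψ' ((ψ' r).unop)).unop = r) (M : ModuleCat R)
    (s' : R') (x : F.obj M) : tensorEquiv α hψ M (s' • x) = s' • tensorEquiv α hψ M x := by
  conv_lhs => rw [← hψ' s']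
  simp only [tensorEquiv, AddEquiv.trans_apply]
  rw [psiRightUnitor_symm_smul, adjEquiv_naturality_right,
    psiEquivTensCar_psiMap_right _ _ _ _ _ s' fun k => by rw [← bimoduleEquiv_smul, hψ']]

noncomputable def tensorIso (hψ' : ∀ r : R', (ψ' ((ψ' r).unop)).unop = r) :
    F ≅ TensFunctor R R' F :=
  NatIso.ofComponents
    (fun M => LinearEquiv.toModuleIso
      ((tensorEquiv α hψ M).toLinearEquiv (tensorEquiv_smul α hψ hψ' M)))
    (fun f => by ext x; exact tensorEquiv_naturality α hψ f x)

end PsiAdjunction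

theorem psi_adjoint_is_tensor_functor
    (R' : Type) [Ring R'] (ψ' : R' →+* R'ᵐᵒᵖ)
    (hψ : ∀ r : R, (ψ ((ψ r).unop)).unop = r)
    (hψ' : ∀ r : R', (ψ' ((ψ' r).unop)).unop = r)
    (F : ModuleCat R ⥤ ModuleCat R')
    (G : ModuleCat R' ⥤ ModuleCat R)
    (hadj : Nonempty ((F ⋙ PsiFunctor R' ψ') ≅
      (PsiFunctor R ψ ⋙ (CategoryTheory.Functor.whiskeringLeft (ModuleCat R') (ModuleCat R)
        AddCommGrpCat).obj G))) :
    Nonempty (F ≅ TensFunctor R R' F) ∧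
    ∃ e : (F.obj (ModuleCat.of R R)) ≃+ (G.obj (ModuleCat.of R' R')),
      (∀ (r : R) (kk : F.obj (ModuleCat.of R R)),
        e (F.map (rmul R ((ψ r).unop)) kk) = r • e kk) ∧
      (∀ (r' : R') (kk : F.obj (ModuleCat.of R R)),
        e (((ψ' r').unop : R') • kk) = G.map (rmul R' r') (e kk)) := by
  obtain ⟨α⟩ := hadj
  exact ⟨⟨PsiAdjunction.tensorIso α hψ hψ'⟩, PsiAdjunction.bimoduleEquiv α hψ,
    PsiAdjunction.bimoduleEquiv_map_rmul_psi α hψ, PsiAdjunction.bimoduleEquiv_smul α hψ⟩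
end

section
/- Let M be a module over a ring with a filtration 0 = Fil_{−2} ⊆ Fil_{−1} ⊆ Fil_0 ⊆ Fil_1 ⊆ ⋯ exhausting M, and let x be an endomorphism of M with x(Fil_k) ⊆ Fil_{k+1} for all k, such that the induced map Gr_k → Gr_{k+1} is an isomorphism for all k ≥ 0. If u ∈ M and f is a 'monic' polynomial expression of degree r ≥ 0 in x (i.e., f(x) = x^r + lower-order terms each mapping Fil_k into Fil_{k+r−1}) with f(x)(u) ∈ Fil_m and m ≥ r − 1, then u ∈ Fil_{m−r}. -/
/-- **Descent along a filtration (Lemma on monic polynomial expressions, case `m ≥ r − 1`).**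
Let `M` be an abelian group with an increasing exhaustive filtration `(Fil k)_{k ∈ ℤ}` with
`Fil k = 0` for `k < −1`, and let `x : M → M` be additive with `x (Fil k) ⊆ Fil (k+1)` such
that the induced maps `Gr k → Gr (k+1)` are isomorphisms for all `k ≥ 0` (expressed below by
injectivity `hGrInj` and surjectivity `hGrSurj` of the induced maps).  Let
`f(x) = x^r + g` be a monic expression of degree `r` in `x`, i.e. `g (Fil k) ⊆ Fil (k+r−1)`.
If `f(x)(u) ∈ Fil m` and `m ≥ r − 1`, then `u ∈ Fil (m − r)`. -/
theorem filtration_monic_descent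
    (M : Type*) [AddCommGroup M] (Fil : ℤ → AddSubgroup M)
    (hmono : ∀ i j : ℤ, i ≤ j → Fil i ≤ Fil j)
    (hbot : ∀ i : ℤ, i < -1 → Fil i = ⊥)
    (hexh : ∀ u : M, ∃ i : ℤ, u ∈ Fil i)
    (x : M →+ M)
    (hx : ∀ i : ℤ, ∀ u ∈ Fil i, x u ∈ Fil (i + 1))
    (hGrInj : ∀ i : ℤ, 0 ≤ i → ∀ u ∈ Fil i, x u ∈ Fil i → u ∈ Fil (i - 1))
    (hGrSurj : ∀ i : ℤ, 0 ≤ i → ∀ v ∈ Fil (i + 1), ∃ u ∈ Fil i, v - x u ∈ Fil i)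
    (r : ℕ) (g : M →+ M)
    (hg : ∀ i : ℤ, ∀ u ∈ Fil i, g u ∈ Fil (i + r - 1))
    (u : M) (m : ℤ)
    (hfu : x^[r] u + g u ∈ Fil m)
    (hm : (r : ℤ) - 1 ≤ m) :
    u ∈ Fil (m - r) := by
  have hiter : ∀ (j : ℕ) (i : ℤ) (v : M), v ∈ Fil i → x^[j] v ∈ Fil (i + j) := by
    intro j
    induction j with
    | zero => intro i v hv; simpa using hv
    | succ j ih =>
      intro i v hv
      have h1 := hx (i + j) _ (ih i v hv)
      rw [Function.iterate_succ_apply']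
      have : (i + (j : ℤ) + 1) = i + ((j : ℕ) + 1 : ℕ) := by push_cast; ring
      rwa [this] at h1
  have hstep : ∀ n : ℤ, m - r + 1 ≤ n → u ∈ Fil n → u ∈ Fil (n - 1) := by
    intro n hn hun
    have hxr : x^[r] u ∈ Fil (n + r - 1) := by
      have h1 : x^[r] u + g u ∈ Fil (n + r - 1) := hmono m _ (by omega) hfu
      have h2 : g u ∈ Fil (n + r - 1) := hg n u hun
      have h3 := sub_mem h1 h2
      simpa using h3
    have key : ∀ j : ℕ, x^[j] u ∈ Fil (n + j - 1) → u ∈ Fil (n - 1) := by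
      intro j
      induction j with
      | zero => intro h; simpa using h
      | succ j ih =>
        intro h
        have h1 : x^[j] u ∈ Fil (n + j) := hiter j n u hun
        have h2 : x (x^[j] u) ∈ Fil (n + j) := by
          rw [Function.iterate_succ_apply'] at h
          have : (n + ((j : ℕ) + 1 : ℕ) - 1 : ℤ) = n + j := by push_cast; ring
          rwa [this] at h
        have h3 := hGrInj (n + j) (by omega) _ h1 h2
        exact ih (by rwa [show (n + (j : ℤ) - 1) = n + j - 1 by ring] at h3)
    exact key r hxr
  obtain ⟨n0, hn0⟩ := hexh u
  rcases le_or_gt n0 (m - r) with h | h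
  · exact hmono n0 _ h hn0
  · have hdown : ∀ d : ℕ, u ∈ Fil (m - r + d) → u ∈ Fil (m - r) := by
      intro d
      induction d with
      | zero => intro h; simpa using h
      | succ d ih =>
        intro h
        have := hstep (m - r + (d + 1 : ℕ)) (by push_cast; omega) h
        exact ih (by rwa [show (m - r + ((d : ℕ) + 1 : ℕ) - 1 : ℤ) = m - r + d by push_cast; ring] at this)
    have hn0' : u ∈ Fil (m - r + (n0 - (m - r)).toNat) := by
      rwa [show (m - r + ((n0 - (m - r)).toNat : ℤ)) = n0 by omega]
    exact hdown _ hn0'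
end

section
/- With the filtration hypotheses as above (x shifts the filtration by 1 and induces isomorphisms Gr_k ≅ Gr_{k+1} for k ≥ 0), if f(x)(u) ∈ Fil_m with f = x^r + lower order and m < r − 1, then u lies in the kernel of the induced map x: Fil_{−1} → Gr_0 (i.e., u ∈ Fil_{−1} and x(u) ∈ Fil_{−1}). -/
/-!
The hypothesis on `f(x)(u)` gives `x^r u ∈ Fil (k + r - 1)` whenever `u ∈ Fil k` with `k ≥ -1`.
Since `x^r : Gr k → Gr (k + r)` is injective for `k ≥ 0`, this pushes `u` down one step of the
filtration at a time, until `u ∈ Fil (-1)`. Applying the same injectivity to `x u ∈ Fil 0` and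
`x^(r-1) (x u) = x^r u ∈ Fil (r - 2)` gives `x u ∈ Fil (-1)`.
-/

section

variable {M : Type*} [AddCommGroup M] {Fil : ℤ → AddSubgroup M} {x : M →+ M}

theorem iterate_mem_add (hx : ∀ i : ℤ, ∀ u ∈ Fil i, x u ∈ Fil (i + 1))
    (n : ℕ) {i : ℤ} {w : M} (hw : w ∈ Fil i) : x^[n] w ∈ Fil (i + n) := by
  induction n with
  | zero => simpa using hw
  | succ n ih =>
    rw [Function.iterate_succ_apply', Nat.cast_succ, ← add_assoc]
    exact hx _ _ ih

theorem mem_pred_of_iterate_mem (hx : ∀ i : ℤ, ∀ u ∈ Fil i, x u ∈ Fil (i + 1))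
    (hGrInj : ∀ i : ℤ, 0 ≤ i → ∀ u ∈ Fil i, x u ∈ Fil i → u ∈ Fil (i - 1))
    (n : ℕ) {a : ℤ} (ha : 0 ≤ a) {w : M} (hw : w ∈ Fil a)
    (hxw : x^[n] w ∈ Fil (a + n - 1)) : w ∈ Fil (a - 1) := by
  induction n with
  | zero => simpa using hxw
  | succ n ih =>
    apply ih
    rw [Function.iterate_succ_apply', Nat.cast_succ, add_sub_assoc, add_sub_cancel_right] at hxw
    exact hGrInj _ (by omega) _ (iterate_mem_add hx n hw) hxw

theorem mem_neg_one_of_forall_mem_pred (hmono : ∀ i j : ℤ, i ≤ j → Fil i ≤ Fil j)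
    {u : M} (hu : ∃ i : ℤ, u ∈ Fil i)
    (hpred : ∀ k : ℤ, 0 ≤ k → u ∈ Fil k → u ∈ Fil (k - 1)) : u ∈ Fil (-1) := by
  obtain ⟨i, hi⟩ := hu
  have key : ∀ k : ℤ, -1 ≤ k → u ∈ Fil k → u ∈ Fil (-1) := by
    intro k hk
    induction k, hk using Int.leInduction with
    | base => exact id
    | succ k hk ih => exact fun h ↦ ih (by simpa using hpred (k + 1) (by omega) h)
  exact key (max i (-1)) (le_max_right _ _) (hmono _ _ (le_max_left _ _) hi)

end

theorem filtration_monic_descent_low_general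
    (M : Type*) [AddCommGroup M] (Fil : ℤ → AddSubgroup M)
    (hmono : ∀ i j : ℤ, i ≤ j → Fil i ≤ Fil j)
    (hexh : ∀ u : M, ∃ i : ℤ, u ∈ Fil i)
    (x : M →+ M)
    (hx : ∀ i : ℤ, ∀ u ∈ Fil i, x u ∈ Fil (i + 1))
    (hGrInj : ∀ i : ℤ, 0 ≤ i → ∀ u ∈ Fil i, x u ∈ Fil i → u ∈ Fil (i - 1))
    (r : ℕ) (g : M →+ M)
    (hg : ∀ i : ℤ, ∀ u ∈ Fil i, g u ∈ Fil (i + r - 1))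
    (u : M) (m : ℤ)
    (hfu : x^[r] u + g u ∈ Fil m)
    (hm : m < (r : ℤ) - 1) :
    u ∈ Fil (-1) ∧ x u ∈ Fil (-1) := by
  have hxr : ∀ k : ℤ, -1 ≤ k → u ∈ Fil k → x^[r] u ∈ Fil (k + r - 1) := fun k hk hu ↦ by
    simpa using sub_mem (hmono m _ (by omega) hfu) (hg k u hu)
  have hu : u ∈ Fil (-1) := mem_neg_one_of_forall_mem_pred hmono (hexh u) fun k hk huk ↦
    mem_pred_of_iterate_mem hx hGrInj r hk huk (hxr k (by omega) huk)
  refine ⟨hu, ?_⟩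
  cases r with
  -- for `r = 0` the hypothesis already gives `u ∈ Fil (-2)`
  | zero => simpa using hx _ _ (hxr (-1) le_rfl hu)
  | succ s =>
    have hxs : x^[s] (x u) ∈ Fil (0 + s - 1) := by
      have := hxr (-1) le_rfl hu
      rwa [Function.iterate_succ_apply, Nat.cast_succ, neg_add_cancel_comm_assoc, ← zero_add (s : ℤ)]
        at this
    simpa using mem_pred_of_iterate_mem hx hGrInj s le_rfl (by simpa using hx _ _ hu) hxs

/-- **Descent along a filtration (Lemma on monic polynomial expressions, case `m < r − 1`).**
Let `M` be an abelian group with an increasing exhaustive filtration `(Fil k)_{k ∈ ℤ}` with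
`Fil k = 0` for `k < −1`, and let `x : M → M` be additive with `x (Fil k) ⊆ Fil (k+1)` such
that the induced maps `Gr k → Gr (k+1)` are isomorphisms for all `k ≥ 0` (expressed below by
injectivity `hGrInj` and surjectivity `hGrSurj` of the induced maps).  Let
`f(x) = x^r + g` be a monic expression of degree `r` in `x`, i.e. `g (Fil k) ⊆ Fil (k+r−1)`.
If `f(x)(u) ∈ Fil m` with `m < r − 1`, then `u` lies in the kernel of the induced map
`x : Fil (−1) → Gr 0`, i.e. `u ∈ Fil (−1)` and `x u ∈ Fil (−1)`. -/
theorem filtration_monic_descent_low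
    (M : Type*) [AddCommGroup M] (Fil : ℤ → AddSubgroup M)
    (hmono : ∀ i j : ℤ, i ≤ j → Fil i ≤ Fil j)
    (hbot : ∀ i : ℤ, i < -1 → Fil i = ⊥)
    (hexh : ∀ u : M, ∃ i : ℤ, u ∈ Fil i)
    (x : M →+ M)
    (hx : ∀ i : ℤ, ∀ u ∈ Fil i, x u ∈ Fil (i + 1))
    (hGrInj : ∀ i : ℤ, 0 ≤ i → ∀ u ∈ Fil i, x u ∈ Fil i → u ∈ Fil (i - 1))
    (hGrSurj : ∀ i : ℤ, 0 ≤ i → ∀ v ∈ Fil (i + 1), ∃ u ∈ Fil i, v - x u ∈ Fil i)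
    (r : ℕ) (g : M →+ M)
    (hg : ∀ i : ℤ, ∀ u ∈ Fil i, g u ∈ Fil (i + r - 1))
    (u : M) (m : ℤ)
    (hfu : x^[r] u + g u ∈ Fil m)
    (hm : m < (r : ℤ) - 1) :
    u ∈ Fil (-1) ∧ x u ∈ Fil (-1) :=
  filtration_monic_descent_low_general M Fil hmono hexh x hx hGrInj r g hg u m hfu hm
end
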